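/- Key computation in the triviality of ξ on stabilizers: with notation as above, ξ_λ(τ_{u_1}τ_{u_2}) = (d(V')·d(V), λ)_{F} = (-λ, λ)_F = 1, where d(V')·d(V) lies in the square class of -λ. -/

import Mathlib

/-! The Hilbert symbol only depends on the square class of its first argument, and a solution
of `z² + λ x² - λ y² = 0` is `(1, 1, 0)`; together these give the chain of equalities. -/

open Classical in
/-- The Hilbert symbol of `a, b ∈ F^×`: it is `1` if `z² - a x² - b y² = 0` has a
nonzero solution `(x, y, z) ∈ F³`, and `-1` otherwise. -/
noncomputable def hilbertSymbol (F : Type*) [Field F] (a b : F) : ℤ :=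
  if ∃ x y z : F, (x, y, z) ≠ (0, 0, 0) ∧ z ^ 2 - a * x ^ 2 - b * y ^ 2 = 0 then 1 else -1

section HilbertSymbol

variable {F : Type*} [Field F]

lemma exists_isotropic_of_mul_sq {a b c : F} (hc : c ≠ 0)
    (h : ∃ x y z : F, (x, y, z) ≠ (0, 0, 0) ∧ z ^ 2 - a * c ^ 2 * x ^ 2 - b * y ^ 2 = 0) :
    ∃ x y z : F, (x, y, z) ≠ (0, 0, 0) ∧ z ^ 2 - a * x ^ 2 - b * y ^ 2 = 0 := by
  obtain ⟨x, y, z, hne, hxyz⟩ := h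
  refine ⟨c * x, y, z, ?_, by linear_combination hxyz⟩
  simpa [hc] using hne

lemma hilbertSymbol_mul_sq (a b : F) {c : F} (hc : c ≠ 0) :
    hilbertSymbol F (a * c ^ 2) b = hilbertSymbol F a b := by
  have hc' : c⁻¹ ≠ 0 := inv_ne_zero hc
  have hcancel : a * c ^ 2 * c⁻¹ ^ 2 = a := by field_simp
  unfold hilbertSymbol
  congr 1
  refine propext ⟨exists_isotropic_of_mul_sq hc, fun h => exists_isotropic_of_mul_sq hc' ?_⟩
  simpa only [hcancel] using h

lemma hilbertSymbol_neg_self (b : F) : hilbertSymbol F (-b) b = 1 :=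
  if_pos ⟨1, 1, 0, by simp, by ring⟩

end HilbertSymbol

theorem spinor_character_value_eq_one_general
    (F : Type*) [Field F]
    (lam : F)
    (qu₁ qu₂ dV' dV : F)
    -- `SN(τ_{u₁} τ_{u₂}) = q(u₁) q(u₂)` lies in the square class of `d(V')·d(V)` …
    (hSN : ∃ c : F, c ≠ 0 ∧ qu₁ * qu₂ = dV' * dV * c ^ 2)
    -- … and `d(V')·d(V)` lies in the square class of `-λ`
    (hsq : ∃ c : F, c ≠ 0 ∧ dV' * dV = -lam * c ^ 2) :
    hilbertSymbol F (qu₁ * qu₂) lam = hilbertSymbol F (dV' * dV) lam ∧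
    hilbertSymbol F (dV' * dV) lam = hilbertSymbol F (-lam) lam ∧
    hilbertSymbol F (-lam) lam = 1 ∧
    hilbertSymbol F (qu₁ * qu₂) lam = 1 := by
  obtain ⟨c₁, hc₁, hSN⟩ := hSN
  obtain ⟨c₂, hc₂, hsq⟩ := hsq
  have spinor_norm : hilbertSymbol F (qu₁ * qu₂) lam = hilbertSymbol F (dV' * dV) lam := by
    rw [hSN, hilbertSymbol_mul_sq _ _ hc₁]
  have discriminant : hilbertSymbol F (dV' * dV) lam = hilbertSymbol F (-lam) lam := by
    rw [hsq, hilbertSymbol_mul_sq _ _ hc₂]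
  have neg_self := hilbertSymbol_neg_self lam
  exact ⟨spinor_norm, discriminant, neg_self, spinor_norm.trans (discriminant.trans neg_self)⟩

/-- Key computation in the triviality of `ξ` on stabilizers: with `u₁, u₂` orthogonal vectors
spanning the complement of `v̄^β`, the spinor norm of `τ_{u₁} τ_{u₂}` is
`q(u₁) q(u₂) = d(V')·d(V)` mod squares, so
`ξ_λ(τ_{u₁} τ_{u₂}) = (q(u₁) q(u₂), λ)_F = (d(V')·d(V), λ)_F = (-λ, λ)_F = 1`,
using that `d(V')·d(V)` lies in the square class of `-λ` and the standard Hilbert-symbol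
identity `(-λ, λ)_F = 1`. -/
theorem spinor_character_value_eq_one
    (F : Type*) [Field F] [TopologicalSpace F] [IsTopologicalRing F]
    [LocallyCompactSpace F] [T2Space F] (hF : ¬ DiscreteTopology F)
    (hchar : ringChar F ≠ 2)
    (lam : F) (hlam : lam ≠ 0)
    (qu₁ qu₂ dV' dV : F) (hqu₁ : qu₁ ≠ 0) (hqu₂ : qu₂ ≠ 0)
    (hdV' : dV' ≠ 0) (hdV : dV ≠ 0)
    -- `SN(τ_{u₁} τ_{u₂}) = q(u₁) q(u₂)` lies in the square class of `d(V')·d(V)` …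
    (hSN : ∃ c : F, c ≠ 0 ∧ qu₁ * qu₂ = dV' * dV * c ^ 2)
    -- … and `d(V')·d(V)` lies in the square class of `-λ`
    (hsq : ∃ c : F, c ≠ 0 ∧ dV' * dV = -lam * c ^ 2) :
    hilbertSymbol F (qu₁ * qu₂) lam = hilbertSymbol F (dV' * dV) lam ∧
    hilbertSymbol F (dV' * dV) lam = hilbertSymbol F (-lam) lam ∧
    hilbertSymbol F (-lam) lam = 1 ∧
    hilbertSymbol F (qu₁ * qu₂) lam = 1 :=
  spinor_character_value_eq_one_general F lam qu₁ qu₂ dV' dV hSN hsq
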